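/- Let K be a nonnegative integrable kernel with ∫_ℝ K = 1, c ≥ 2, β > 1, and let φ be a positive bounded C² solution of the truncated profile equation φ'' − cφ' + g_β(φ)(1 − K*φ) = 0 with lim_{t→−∞} φ(t) = 0, such that the limit φ(+∞) = lim_{t→+∞} φ(t) exists. Then φ(+∞) ∈ {1, 2β}. If φ(+∞) = 2β, then there is a smallest T₁ ∈ ℝ with φ(t) = 2β for all t ≥ T₁, and (K*φ)(T₁) ≤ 1. Furthermore, if 2β ∫_{−∞}^0 K(s) ds > 1, then φ(+∞) = 1. -/

import Mathlib

/-!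
Write `q = g_β(φ)(1 - K*φ)`, so that `φ'' - cφ' = -q`. Since `e^{-ct}φ'` has derivative
`-e^{-ct}q`, a sign of `q` on a half-line `(a, ∞)` forces the opposite sign of `φ'` on `[a, ∞)`:
otherwise `φ'` stays away from `0` and the bounded function `φ` escapes its bounds. As `g_β`
vanishes on `[2β, ∞)`, `φ` is constant on every half-line where `φ ≥ 2β`.

Since `φ` is bounded, `φ' - cφ` cannot have a nonzero derivative limit, so the limit
`g_β(l)(1 - l)` of `q` vanishes and `l ∈ {0, 1} ∪ [2β, ∞)`. If `l = 0` then `q ≥ 0` near `+∞`,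
so `φ` is eventually nondecreasing; if `l > 2β`, `φ` is constant after its last visit to
`(0, 2β]`. If `l = 2β` then `q ≤ 0` near `+∞` and `φ ≡ 2β` on a half-line; if `(K*φ)(T₁) > 1`
at the end point `T₁` of the maximal one, `q ≤ 0` also holds slightly to the left of `T₁` and the
half-line extends. Finally `φ ≡ 2β` on `[T₁, ∞)` gives `(K*φ)(T₁) ≥ 2β ∫_{-∞}^0 K`.
-/

open Filter MeasureTheory Real Set

noncomputable def conv (K φ : ℝ → ℝ) (t : ℝ) : ℝ := ∫ s, K s * φ (t - s)

noncomputable def gbeta (β u : ℝ) : ℝ := if u ≤ β then u else max 0 (2 * β - u)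

def TruncProfileEq (K : ℝ → ℝ) (c β : ℝ) (φ : ℝ → ℝ) : Prop :=
  ∀ t, deriv (deriv φ) t - c * deriv φ t + gbeta β (φ t) * (1 - conv K φ t) = 0

open Topology

section Convolution

variable {K φ : ℝ → ℝ} {M : ℝ}

theorem conv_eq_convolution :
    conv K φ = convolution K φ (ContinuousLinearMap.lsmul ℝ ℝ) volume := by
  ext t
  simp [conv, convolution_def]

theorem integrable_conv_integrand (hK : Integrable K) (hφ : Continuous φ) (hM : ∀ t, |φ t| ≤ M)
    (t : ℝ) : Integrable fun s => K s * φ (t - s) :=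
  hK.mul_bdd (by fun_prop) (ae_of_all _ fun s => hM (t - s))

theorem continuous_conv (hK : Integrable K) (hφ : Continuous φ) (hM : ∀ t, |φ t| ≤ M) :
    Continuous (conv K φ) := by
  rw [conv_eq_convolution]
  have hb : BddAbove (range fun t => ‖φ t‖) := ⟨M, forall_mem_range.2 hM⟩
  exact hb.continuous_convolution_right_of_integrable _ hK hφ

theorem tendsto_conv_atTop {l : ℝ} (hK : Integrable K) (hK1 : ∫ s, K s = 1) (hφ : Continuous φ)
    (hM : ∀ t, |φ t| ≤ M) (hl : Tendsto φ atTop (𝓝 l)) : Tendsto (conv K φ) atTop (𝓝 l) := by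
  have hlim := tendsto_integral_filter_of_dominated_convergence (fun s => |K s| * M)
    (Eventually.of_forall fun t => (integrable_conv_integrand hK hφ hM t).aestronglyMeasurable)
    (Eventually.of_forall fun t => ae_of_all _ fun s => by
      rw [norm_mul]; exact mul_le_mul_of_nonneg_left (hM _) (abs_nonneg _))
    (hK.abs.mul_const M)
    (ae_of_all _ fun s =>
      (hl.comp (tendsto_atTop_add_const_right _ (-s) tendsto_id)).const_mul (K s))
  rwa [integral_mul_const, hK1, one_mul] at hlim

theorem mul_setIntegral_Iic_le_conv {T v : ℝ} (hK : Integrable K) (hK0 : 0 ≤ᵐ[volume] K)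
    (hφ : Continuous φ) (hM : ∀ t, |φ t| ≤ M) (hφ0 : ∀ t, 0 ≤ φ t) (h : ∀ t, T ≤ t → φ t = v) :
    v * ∫ s in Iic 0, K s ≤ conv K φ T := calc
  v * ∫ s in Iic 0, K s = ∫ s in Iic 0, K s * φ (T - s) := by
    rw [← integral_const_mul]
    refine setIntegral_congr_fun measurableSet_Iic fun s hs => ?_
    rw [h (T - s) (by linarith [mem_Iic.1 hs]), mul_comm]
  _ ≤ conv K φ T := setIntegral_le_integral (integrable_conv_integrand hK hφ hM T)
    (hK0.mono fun s hs => mul_nonneg hs (hφ0 _))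

end Convolution

section Truncation

variable {β u : ℝ}

theorem continuous_gbeta (hβ : 0 ≤ β) : Continuous (gbeta β) :=
  Continuous.if_le continuous_id (continuous_const.max (continuous_const.sub continuous_id))
    continuous_id continuous_const fun u hu => by
      rw [hu, show 2 * β - β = β by ring, max_eq_right hβ]

theorem gbeta_nonneg (hu : 0 ≤ u) : 0 ≤ gbeta β u := by
  unfold gbeta
  split_ifs
  exacts [hu, le_max_left _ _]

theorem gbeta_eq_zero_iff (hβ : 0 ≤ β) : gbeta β u = 0 ↔ u = 0 ∨ 2 * β ≤ u := by
  unfold gbeta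
  split_ifs with h
  · constructor
    · exact Or.inl
    · rintro (hu | hu) <;> linarith
  · rw [max_eq_left_iff]
    constructor
    · intro h'; right; linarith
    · rintro (hu | hu) <;> linarith

theorem gbeta_eq_zero_of_le (hβ : 0 ≤ β) (hu : 2 * β ≤ u) : gbeta β u = 0 :=
  (gbeta_eq_zero_iff hβ).2 (Or.inr hu)

end Truncation

section SecondOrder

variable {f : ℝ → ℝ} {a c ε L : ℝ}

theorem tendsto_atTop_of_eventually_le_deriv (hf : Differentiable ℝ f) (hε : 0 < ε)
    (h : ∀ᶠ t in atTop, ε ≤ deriv f t) : Tendsto f atTop atTop := by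
  obtain ⟨a, ha⟩ := eventually_atTop.1 h
  have hmono : MonotoneOn (fun t => f t - ε * t) (Ici a) := by
    refine monotoneOn_of_deriv_nonneg (convex_Ici a) ?_ (by fun_prop) fun t ht => ?_
    · exact (hf.continuous.sub (continuous_const.mul continuous_id)).continuousOn
    rw [interior_Ici] at ht
    have := ha t (le_of_lt ht)
    rw [deriv_fun_sub (hf t) (by fun_prop), deriv_const_mul_field', deriv_id'']
    linarith
  have hlin : Tendsto (fun t => ε * t + (f a - ε * a)) atTop atTop :=
    tendsto_atTop_add_const_right _ _ (tendsto_id.const_mul_atTop hε)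
  refine tendsto_atTop_mono' _ ?_ hlin
  filter_upwards [eventually_ge_atTop a] with t ht
  have := hmono self_mem_Ici ht ht
  simp only at this
  linarith

theorem monotoneOn_exp_neg_mul_deriv (hf : ContDiff ℝ 2 f)
    (h : ∀ t, a < t → c * deriv f t ≤ deriv (deriv f) t) :
    MonotoneOn (fun t => exp (-(c * t)) * deriv f t) (Ici a) := by
  have hd : ∀ t, HasDerivAt (fun t => exp (-(c * t)) * deriv f t)
      (exp (-(c * t)) * (deriv (deriv f) t - c * deriv f t)) t := fun t => by
    have hexp : HasDerivAt (fun t => exp (-(c * t))) (exp (-(c * t)) * -c) t := by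
      simpa using ((hasDerivAt_id t).const_mul c).neg.exp
    exact (hexp.mul (hf.differentiable_deriv_two t).hasDerivAt).congr_deriv (by ring)
  refine monotoneOn_of_deriv_nonneg (convex_Ici a) (continuous_iff_continuousAt.2 fun t =>
    (hd t).continuousAt).continuousOn (fun t _ => (hd t).differentiableAt.differentiableWithinAt)
    fun t ht => ?_
  rw [interior_Ici] at ht
  rw [(hd t).deriv]
  exact mul_nonneg (exp_pos _).le (sub_nonneg.2 (h t ht))


theorem deriv_nonpos_of_bddAbove (hf : ContDiff ℝ 2 f) (hc : 0 ≤ c) (hbdd : BddAbove (range f))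
    (h : ∀ t, a < t → c * deriv f t ≤ deriv (deriv f) t) : ∀ t, a ≤ t → deriv f t ≤ 0 := by
  intro t₀ ht₀
  by_contra! hpos
  have hgrow : ∀ t, t₀ ≤ t → deriv f t₀ ≤ deriv f t := fun t ht => by
    have hψ := monotoneOn_exp_neg_mul_deriv hf h (mem_Ici.2 ht₀) (mem_Ici.2 (ht₀.trans ht)) ht
    have hexp : exp (-(c * t)) ≤ exp (-(c * t₀)) := exp_le_exp.2 (by nlinarith)
    exact le_of_mul_le_mul_left ((mul_le_mul_of_nonneg_right hexp hpos.le).trans hψ) (exp_pos _)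
  exact not_bddAbove_of_tendsto_atTop (tendsto_atTop_of_eventually_le_deriv
    (hf.differentiable (by norm_num)) hpos (eventually_atTop.2 ⟨t₀, hgrow⟩)) hbdd

theorem deriv_nonneg_of_bddBelow (hf : ContDiff ℝ 2 f) (hc : 0 ≤ c) (hbdd : BddBelow (range f))
    (h : ∀ t, a < t → deriv (deriv f) t ≤ c * deriv f t) : ∀ t, a ≤ t → 0 ≤ deriv f t := by
  have := deriv_nonpos_of_bddAbove hf.neg hc hbdd.range_neg (a := a) (fun t ht => by
    simpa only [deriv.fun_neg', mul_neg, neg_le_neg_iff] using h t ht)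
  simpa only [deriv.fun_neg', neg_nonpos] using this

theorem eq_of_deriv_deriv_eq_mul_deriv (hf : ContDiff ℝ 2 f) (hc : 0 ≤ c)
    (hA : BddAbove (range f)) (hB : BddBelow (range f))
    (h : ∀ t, a < t → deriv (deriv f) t = c * deriv f t) :
    ∀ t, a ≤ t → f t = f a := by
  have hd := hf.differentiable (by norm_num)
  have h0 : ∀ t, a ≤ t → deriv f t = 0 := fun t ht => le_antisymm
    (deriv_nonpos_of_bddAbove hf hc hA (fun s hs => (h s hs).ge) t ht)
    (deriv_nonneg_of_bddBelow hf hc hB (fun s hs => (h s hs).le) t ht)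
  intro t ht
  refine constant_of_has_deriv_right_zero hd.continuous.continuousOn (fun s hs => ?_) t ⟨ht, le_rfl⟩
  exact h0 s hs.1 ▸ (hd s).hasDerivAt.hasDerivWithinAt

theorem nonpos_of_tendsto_deriv_deriv_sub (hf : ContDiff ℝ 2 f) (hc : 0 ≤ c)
    (hA : BddAbove (range f)) (hB : BddBelow (range f))
    (hL : Tendsto (fun t => deriv (deriv f) t - c * deriv f t) atTop (𝓝 L)) : L ≤ 0 := by
  by_contra! hL0
  obtain ⟨m, hm⟩ := hB
  have hd := hf.differentiable (by norm_num)
  have hu : Tendsto (fun t => deriv f t - c * f t) atTop atTop := by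
    refine tendsto_atTop_of_eventually_le_deriv (by fun_prop) (half_pos hL0) ?_
    filter_upwards [hL.eventually (eventually_ge_nhds (half_lt_self hL0))] with t ht
    rwa [deriv_fun_sub (hf.differentiable_deriv_two t) ((hd t).const_mul c),
      deriv_const_mul _ (hd t)]
  have hf' : Tendsto (deriv f) atTop atTop := by
    refine tendsto_atTop_mono (fun t => ?_) (tendsto_atTop_add_const_right _ (c * m) hu)
    have := mul_le_mul_of_nonneg_left (hm (mem_range_self t)) hc
    linarith
  exact not_bddAbove_of_tendsto_atTop (tendsto_atTop_of_eventually_le_deriv hd one_pos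
    (hf'.eventually_ge_atTop 1)) hA

theorem eq_zero_of_tendsto_deriv_deriv_sub (hf : ContDiff ℝ 2 f) (hc : 0 ≤ c)
    (hA : BddAbove (range f)) (hB : BddBelow (range f))
    (hL : Tendsto (fun t => deriv (deriv f) t - c * deriv f t) atTop (𝓝 L)) : L = 0 := by
  refine le_antisymm (nonpos_of_tendsto_deriv_deriv_sub hf hc hA hB hL) ?_
  have := nonpos_of_tendsto_deriv_deriv_sub hf.neg hc hB.range_neg hA.range_neg (L := -L)
    (by simpa only [deriv.fun_neg', mul_neg, neg_sub_neg, neg_sub'] using hL.neg)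
  linarith

end SecondOrder

theorem isLeast_sInf_setOf_forall_le_imp {p : ℝ → Prop} (hp : IsClosed {t | p t})
    (hne : ∃ T, ∀ t, T ≤ t → p t) (hbdd : BddBelow {T | ∀ t, T ≤ t → p t}) :
    IsLeast {T | ∀ t, T ≤ t → p t} (sInf {T | ∀ t, T ≤ t → p t}) := by
  refine ⟨fun t ht => ?_, fun T hT => csInf_le hbdd hT⟩
  have hIoi : Ioi (sInf {T | ∀ t, T ≤ t → p t}) ⊆ {t | p t} := fun t ht =>
    let ⟨_, hT, hTt⟩ := (csInf_lt_iff hbdd hne).1 ht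
    hT t hTt.le
  exact hp.closure_subset_iff.2 hIoi (by rwa [closure_Ioi])

namespace TruncProfileEq

variable {K φ : ℝ → ℝ} {c β a l : ℝ}

theorem eq_of_two_mul_le (heq : TruncProfileEq K c β φ) (hφ : ContDiff ℝ 2 φ) (hc : 0 ≤ c)
    (hβ : 0 ≤ β) (hA : BddAbove (range φ)) (hB : BddBelow (range φ))
    (h : ∀ t, a < t → 2 * β ≤ φ t) : ∀ t, a ≤ t → φ t = φ a :=
  eq_of_deriv_deriv_eq_mul_deriv hφ hc hA hB fun t ht => by
    have := heq t
    rw [gbeta_eq_zero_of_le hβ (h t ht), zero_mul] at this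
    linarith

theorem eq_two_mul_of_gbeta_mul_nonpos (heq : TruncProfileEq K c β φ) (hφ : ContDiff ℝ 2 φ)
    (hc : 0 ≤ c) (hβ : 0 ≤ β) (hA : BddAbove (range φ)) (hB : BddBelow (range φ))
    (hl : Tendsto φ atTop (𝓝 (2 * β)))
    (h : ∀ t, a < t → gbeta β (φ t) * (1 - conv K φ t) ≤ 0) : ∀ t, a ≤ t → φ t = 2 * β := by
  have hφ' := deriv_nonpos_of_bddAbove hφ hc hA fun t ht => by linarith [heq t, h t ht]
  have hanti : AntitoneOn φ (Ici a) :=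
    antitoneOn_of_deriv_nonpos (convex_Ici a) hφ.continuous.continuousOn
      (hφ.differentiable (by norm_num)).differentiableOn fun t ht =>
        hφ' t (le_of_lt (by rwa [interior_Ici] at ht))
  have hconst := heq.eq_of_two_mul_le hφ hc hβ hA hB fun t ht => le_of_tendsto hl
    (eventually_atTop.2 ⟨t, fun s hs => hanti (mem_Ici.2 ht.le) (mem_Ici.2 (ht.le.trans hs)) hs⟩)
  have hφa : φ a = 2 * β := tendsto_nhds_unique (tendsto_const_nhds.congr'
    (eventually_atTop.2 ⟨a, fun t ht => (hconst t ht).symm⟩)) hl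
  exact fun t ht => (hconst t ht).trans hφa

theorem ne_zero_of_tendsto (heq : TruncProfileEq K c β φ) (hφ : ContDiff ℝ 2 φ) (hc : 0 ≤ c)
    (hpos : ∀ t, 0 < φ t) (hl : Tendsto φ atTop (𝓝 l))
    (hconv : Tendsto (conv K φ) atTop (𝓝 l)) : l ≠ 0 := by
  rintro rfl
  obtain ⟨R, hR⟩ := eventually_atTop.1 (hconv.eventually (eventually_lt_nhds one_pos))
  have hφ' := deriv_nonneg_of_bddBelow hφ hc ⟨0, forall_mem_range.2 fun t => (hpos t).le⟩
    (a := R) fun t ht => by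
      have := mul_nonneg (gbeta_nonneg (β := β) (hpos t).le) (sub_nonneg.2 (hR t ht.le).le)
      linarith [heq t]
  have hmono : MonotoneOn φ (Ici R) :=
    monotoneOn_of_deriv_nonneg (convex_Ici R) hφ.continuous.continuousOn
      (hφ.differentiable (by norm_num)).differentiableOn fun t ht =>
        hφ' t (le_of_lt (by rwa [interior_Ici] at ht))
  have : φ R ≤ 0 := ge_of_tendsto hl
    (eventually_atTop.2 ⟨R, fun t ht => hmono self_mem_Ici (mem_Ici.2 ht) ht⟩)
  exact (hpos R).not_ge this

theorem le_two_mul_of_tendsto (heq : TruncProfileEq K c β φ) (hφ : ContDiff ℝ 2 φ) (hc : 0 ≤ c)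
    (hβ : 0 < β) (hA : BddAbove (range φ)) (hB : BddBelow (range φ))
    (hbot : Tendsto φ atBot (𝓝 0)) (hl : Tendsto φ atTop (𝓝 l)) : l ≤ 2 * β := by
  by_contra! hlt
  set E := {t | φ t ≤ 2 * β}
  have hne : E.Nonempty := (hbot.eventually (eventually_le_nhds (by positivity))).exists
  obtain ⟨R, hR⟩ := eventually_atTop.1 (hl.eventually (eventually_gt_nhds hlt))
  have hbdd : BddAbove E := ⟨R, fun t ht => not_lt.1 fun h => (hR t h.le).not_ge ht⟩
  have hsup : φ (sSup E) ≤ 2 * β := (isClosed_le hφ.continuous continuous_const).csSup_mem hne hbdd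
  have hgt : ∀ t, sSup E < t → 2 * β < φ t := fun t ht =>
    not_le.1 fun h => ht.not_ge (le_csSup hbdd h)
  have := heq.eq_of_two_mul_le hφ hc hβ.le hA hB (fun t ht => (hgt t ht).le) (sSup E + 1)
    (by linarith)
  linarith [hgt (sSup E + 1) (by linarith)]

theorem gbeta_mul_eq_zero_of_tendsto (heq : TruncProfileEq K c β φ) (hφ : ContDiff ℝ 2 φ)
    (hc : 0 ≤ c) (hβ : 0 ≤ β) (hA : BddAbove (range φ)) (hB : BddBelow (range φ))
    (hl : Tendsto φ atTop (𝓝 l)) (hconv : Tendsto (conv K φ) atTop (𝓝 l)) :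
    gbeta β l * (1 - l) = 0 := by
  have hforce : Tendsto (fun t => gbeta β (φ t) * (1 - conv K φ t)) atTop
      (𝓝 (gbeta β l * (1 - l))) :=
    (((continuous_gbeta hβ).tendsto l).comp hl).mul (tendsto_const_nhds.sub hconv)
  exact neg_eq_zero.1 (eq_zero_of_tendsto_deriv_deriv_sub hφ hc hA hB
    (hforce.neg.congr fun t => by linarith [heq t]))

theorem eq_one_or_eq_two_mul_of_tendsto (heq : TruncProfileEq K c β φ) (hφ : ContDiff ℝ 2 φ)
    (hc : 0 ≤ c) (hβ : 0 < β) (hpos : ∀ t, 0 < φ t) (hA : BddAbove (range φ))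
    (hbot : Tendsto φ atBot (𝓝 0)) (hl : Tendsto φ atTop (𝓝 l))
    (hconv : Tendsto (conv K φ) atTop (𝓝 l)) : l = 1 ∨ l = 2 * β := by
  have hB : BddBelow (range φ) := ⟨0, forall_mem_range.2 fun t => (hpos t).le⟩
  rcases mul_eq_zero.1 (heq.gbeta_mul_eq_zero_of_tendsto hφ hc hβ.le hA hB hl hconv) with hg | hl1
  · rcases (gbeta_eq_zero_iff hβ.le).1 hg with hl0 | hl2
    · exact absurd hl0 (heq.ne_zero_of_tendsto hφ hc hpos hl hconv)
    · exact Or.inr (le_antisymm (heq.le_two_mul_of_tendsto hφ hc hβ hA hB hbot hl) hl2)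
  · exact Or.inl (by linarith)

theorem conv_le_one_of_isLeast (heq : TruncProfileEq K c β φ) (hφ : ContDiff ℝ 2 φ) (hc : 0 ≤ c)
    (hβ : 0 < β) (hA : BddAbove (range φ)) (hB : BddBelow (range φ))
    (hcont : Continuous (conv K φ)) {T₁ : ℝ}
    (hT₁ : IsLeast {T | ∀ t, T ≤ t → φ t = 2 * β} T₁) : conv K φ T₁ ≤ 1 := by
  by_contra! hgt
  have hφT₁ : φ T₁ = 2 * β := hT₁.1 T₁ le_rfl
  obtain ⟨δ, hδ, hball⟩ := Metric.eventually_nhds_iff.1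
    (((hcont.tendsto T₁).eventually (eventually_gt_nhds hgt)).and
      ((hφ.continuous.tendsto T₁).eventually (eventually_gt_nhds (by linarith : β < φ T₁))))
  have hl : Tendsto φ atTop (𝓝 (2 * β)) := tendsto_const_nhds.congr'
    (eventually_atTop.2 ⟨T₁, fun t ht => (hT₁.1 t ht).symm⟩)
  have hforce : ∀ t, T₁ - δ < t → gbeta β (φ t) * (1 - conv K φ t) ≤ 0 := fun t ht => by
    rcases lt_or_ge t T₁ with htT | hTt
    · obtain ⟨h1, h2⟩ := hball (show dist t T₁ < δ by
        rw [Real.dist_eq, abs_lt]; constructor <;> linarith)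
      exact mul_nonpos_of_nonneg_of_nonpos (gbeta_nonneg (by linarith)) (by linarith)
    · rw [hT₁.1 t hTt, gbeta_eq_zero_of_le hβ.le le_rfl, zero_mul]
  linarith [hT₁.2 (heq.eq_two_mul_of_gbeta_mul_nonpos hφ hc hβ.le hA hB hl hforce)]

theorem exists_isLeast_conv_le_one (heq : TruncProfileEq K c β φ) (hφ : ContDiff ℝ 2 φ)
    (hc : 0 ≤ c) (hβ : 1 < 2 * β) (hA : BddAbove (range φ)) (hB : BddBelow (range φ))
    (hbot : Tendsto φ atBot (𝓝 0)) (hl : Tendsto φ atTop (𝓝 (2 * β)))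
    (hconv : Tendsto (conv K φ) atTop (𝓝 (2 * β))) (hcont : Continuous (conv K φ)) :
    ∃ T₁, IsLeast {T | ∀ t, T ≤ t → φ t = 2 * β} T₁ ∧ conv K φ T₁ ≤ 1 := by
  have hβ0 : 0 < β := by linarith
  obtain ⟨R, hR⟩ := eventually_atTop.1 ((hconv.eventually (eventually_gt_nhds hβ)).and
    (hl.eventually (eventually_gt_nhds (by linarith : β < 2 * β))))
  have hRmem : ∀ t, R ≤ t → φ t = 2 * β :=
    heq.eq_two_mul_of_gbeta_mul_nonpos hφ hc hβ0.le hA hB hl fun t ht =>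
      mul_nonpos_of_nonneg_of_nonpos (gbeta_nonneg (by linarith [(hR t ht.le).2]))
        (by linarith [(hR t ht.le).1])
  obtain ⟨t₀, ht₀⟩ := (hbot.eventually (eventually_lt_nhds (by linarith : (0 : ℝ) < 2 * β))).exists
  have hbdd : BddBelow {T | ∀ t, T ≤ t → φ t = 2 * β} :=
    ⟨t₀, fun T hT => not_lt.1 fun h => ht₀.ne (hT t₀ h.le)⟩
  have hLeast := isLeast_sInf_setOf_forall_le_imp (isClosed_eq hφ.continuous continuous_const)
    ⟨R, hRmem⟩ hbdd
  exact ⟨_, hLeast, heq.conv_le_one_of_isLeast hφ hc hβ0 hA hB hcont hLeast⟩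

end TruncProfileEq

/-- if a positive bounded solution of the truncated equation with
`φ(-∞) = 0` converges at `+∞` then its limit is `1` or `2β`; in the latter
case `φ ≡ 2β` on a maximal ray `[T₁, +∞)` with `(K*φ)(T₁) ≤ 1`; and if
`2β ∫_{-∞}^0 K > 1` then the limit is `1`. -/
theorem truncated_limit_dichotomy
    (K : ℝ → ℝ) (hKi : Integrable K)
    (hK0 : ∀ᵐ s ∂(volume : Measure ℝ), 0 ≤ K s)
    (hK1 : (∫ s, K s) = 1)
    (c β : ℝ) (hc : 2 ≤ c) (hβ : 1 < β)
    (φ : ℝ → ℝ) (hφC : ContDiff ℝ 2 φ) (hφpos : ∀ t, 0 < φ t)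
    (hbdd : ∃ M, ∀ t, φ t ≤ M)
    (heq : TruncProfileEq K c β φ)
    (hbot : Tendsto φ atBot (nhds 0))
    (l : ℝ) (hl : Tendsto φ atTop (nhds l)) :
    (l = 1 ∨ l = 2 * β) ∧
    (l = 2 * β →
      ∃ T₁ : ℝ, IsLeast {T : ℝ | ∀ t, T ≤ t → φ t = 2 * β} T₁ ∧
        conv K φ T₁ ≤ 1) ∧
    (1 < 2 * β * ∫ s in Iic (0 : ℝ), K s → l = 1) := by
  obtain ⟨M, hM⟩ := hbdd
  have hA : BddAbove (range φ) := ⟨M, forall_mem_range.2 hM⟩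
  have hB : BddBelow (range φ) := ⟨0, forall_mem_range.2 fun t => (hφpos t).le⟩
  have habs : ∀ t, |φ t| ≤ M := fun t => (abs_of_pos (hφpos t)).trans_le (hM t)
  have hconv := tendsto_conv_atTop hKi hK1 hφC.continuous habs hl
  have hdich : l = 1 ∨ l = 2 * β :=
    heq.eq_one_or_eq_two_mul_of_tendsto hφC (by linarith) (by linarith) hφpos hA hbot hl hconv
  have hray : l = 2 * β →
      ∃ T₁ : ℝ, IsLeast {T : ℝ | ∀ t, T ≤ t → φ t = 2 * β} T₁ ∧ conv K φ T₁ ≤ 1 := by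
    rintro rfl
    exact heq.exists_isLeast_conv_le_one hφC (by linarith) (by linarith) hA hB hbot hl hconv
      (continuous_conv hKi hφC.continuous habs)
  refine ⟨hdich, hray, fun hmass => hdich.resolve_right fun hl2 => ?_⟩
  obtain ⟨T₁, hT₁, hconvT₁⟩ := hray hl2
  have := mul_setIntegral_Iic_le_conv hKi hK0 hφC.continuous habs (fun t => (hφpos t).le) hT₁.1
  linarith
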